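/- For Lebesgue-almost every irrational α ∈ (0,1), the sum of the reciprocals of the partial sums of its partial quotients diverges: Σ_{i=1}^∞ 1/A_i(α) = ∞. -/

import Mathlib

open MeasureTheory Filter
open scoped ENNReal

/-- The ±1 observable: +1 if `y mod 1 ∈ [0, 1/2]`, −1 otherwise. -/
noncomputable def birkhoffF (y : ℝ) : ℤ := if Int.fract y ≤ 1 / 2 then 1 else -1

/-- Birkhoff sums `S_n(α,x) = ∑_{i=0}^{n-1} f(x + iα)`. -/
noncomputable def birkhoffS (α x : ℝ) (n : ℕ) : ℤ :=
  ∑ i ∈ Finset.range n, birkhoffF (x + i * α)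

/-- Balanced times `V_{α,x}`. -/
noncomputable def balancedTimes (α x : ℝ) : Set ℕ :=
  {n : ℕ | 1 ≤ n ∧ birkhoffS α x n = 0}

/-- The Gauss map. -/
noncomputable def gaussMap (x : ℝ) : ℝ := Int.fract x⁻¹

/-- The `i`-th partial quotient of `α` (for `i ≥ 1`). -/
noncomputable def cfA (α : ℝ) (i : ℕ) : ℕ := ⌊(gaussMap^[i - 1] α)⁻¹⌋₊

/-- `A_n(α) = a_1(α) + ⋯ + a_n(α)`. -/
noncomputable def cfSumA (α : ℝ) (n : ℕ) : ℕ := ∑ i ∈ Finset.Icc 1 n, cfA α i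

/-- Denominators of convergents from a sequence of partial quotients. -/
def denomRec (c : ℕ → ℕ) : ℕ → ℕ
  | 0 => 1
  | 1 => c 1
  | n + 2 => c (n + 2) * denomRec c (n + 1) + denomRec c n

/-- `q_n(α)`. -/
noncomputable def cfQ (α : ℝ) : ℕ → ℕ := denomRec (cfA α)

/-- Upper density of a set of naturals. -/
noncomputable def upperDensity (S : Set ℕ) : ℝ :=
  Filter.limsup
    (fun N => (∑ n ∈ Finset.Icc 1 N, Set.indicator S (fun _ => (1 : ℝ)) n) / N)
    Filter.atTop

/-- The Gauss measure on (0,1). -/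
noncomputable def gaussMeasure : Measure ℝ :=
  (volume.restrict (Set.Ioo 0 1)).withDensity
    (fun x => ENNReal.ofReal (1 / ((1 + x) * Real.log 2)))

/-- Interleaved partial quotients `[2a_1, b_1, 2a_2, b_2, …]`. -/
def interleave (a b : ℕ → ℕ) (j : ℕ) : ℕ :=
  if j % 2 = 1 then 2 * a ((j + 1) / 2) else b (j / 2)

open Set
open scoped NNReal

noncomputable def gdens (x : ℝ) : ℝ≥0∞ := ENNReal.ofReal (1 + x)⁻¹

noncomputable def rho : Measure ℝ := volume.restrict (Set.Ioo 0 1)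

noncomputable def gmu : Measure ℝ := rho.withDensity gdens

lemma measurable_gaussMap : Measurable gaussMap :=
  measurable_fract.comp measurable_inv

lemma measurable_gdens : Measurable gdens :=
  (measurable_const.add measurable_id).inv.ennreal_ofReal

lemma gmu_apply {A : Set ℝ} (hA : MeasurableSet A) :
    gmu A = ∫⁻ x in A ∩ Set.Ioo 0 1, gdens x := by
  rw [gmu, withDensity_apply _ hA, rho, Measure.restrict_restrict hA]

lemma gmu_inter {A : Set ℝ} (hA : MeasurableSet A) :
    gmu A = gmu (A ∩ Set.Ioo 0 1) := by
  rw [gmu_apply hA, gmu_apply (hA.inter measurableSet_Ioo), Set.inter_assoc, Set.inter_self]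

lemma gmu_null {A : Set ℝ} (hA : A.Countable) : gmu A = 0 := by
  rw [gmu_apply hA.measurableSet]
  have h0 : volume (A ∩ Set.Ioo (0:ℝ) 1) = 0 := (hA.mono Set.inter_subset_left).measure_zero _
  rw [Measure.restrict_eq_zero.mpr h0, lintegral_zero_measure]

lemma branch_image_subset {S : Set ℝ} (hS1 : S ⊆ Set.Ioo 0 1) (k : ℕ) :
    (fun t => ((k:ℝ)+1+t)⁻¹) '' S ⊆ Set.Ioo ((k:ℝ)+2)⁻¹ ((k:ℝ)+1)⁻¹ := by
  rintro x ⟨t, htS, rfl⟩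
  obtain ⟨ht0, ht1⟩ := hS1 htS
  constructor
  · apply inv_strictAnti₀
    · positivity
    · linarith
  · apply inv_strictAnti₀
    · positivity
    · linarith

lemma branch_image_subset' {S : Set ℝ} (hS1 : S ⊆ Set.Ioo 0 1) (k : ℕ) :
    (fun t => ((k:ℝ)+1+t)⁻¹) '' S ⊆ Set.Ioo 0 1 := by
  refine (branch_image_subset hS1 k).trans ?_
  intro x ⟨h1, h2⟩
  constructor
  · have : (0:ℝ) < ((k:ℝ)+2)⁻¹ := by positivity
    linarith
  · have h3 : ((k:ℝ)+1)⁻¹ ≤ 1 := by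
      rw [inv_le_one_iff₀]; right; linarith [Nat.cast_nonneg (α := ℝ) k]
    linarith

lemma branch_decomp {S : Set ℝ} (hS1 : S ⊆ Set.Ioo 0 1) :
    gaussMap ⁻¹' S ∩ Set.Ioo 0 1 = ⋃ k : ℕ, (fun t => ((k:ℝ)+1+t)⁻¹) '' S := by
  ext x
  constructor
  · rintro ⟨hGS, hx0, hx1⟩
    have hxinv : 1 < x⁻¹ := one_lt_inv_iff₀.mpr ⟨hx0, hx1⟩
    have hinv0 : (0:ℝ) ≤ x⁻¹ := by positivity
    have hfl1 : 1 ≤ ⌊x⁻¹⌋₊ := by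
      rw [Nat.one_le_iff_ne_zero, ← Nat.pos_iff_ne_zero, Nat.floor_pos]
      linarith
    refine Set.mem_iUnion.mpr ⟨⌊x⁻¹⌋₊ - 1, gaussMap x, hGS, ?_⟩
    have hcast : ((⌊x⁻¹⌋₊ - 1 : ℕ) : ℝ) + 1 = (⌊x⁻¹⌋₊ : ℝ) := by
      rw [Nat.cast_sub hfl1]; push_cast; ring
    have hflr : (⌊x⁻¹⌋₊ : ℝ) = ((⌊x⁻¹⌋ : ℤ) : ℝ) := natCast_floor_eq_intCast_floor hinv0
    have hsum : ((⌊x⁻¹⌋₊ - 1 : ℕ) : ℝ) + 1 + gaussMap x = x⁻¹ := by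
      rw [hcast, hflr]
      show ((⌊x⁻¹⌋ : ℤ) : ℝ) + Int.fract x⁻¹ = x⁻¹
      rw [Int.floor_add_fract]
    show (((⌊x⁻¹⌋₊ - 1 : ℕ) : ℝ) + 1 + gaussMap x)⁻¹ = x
    rw [hsum, inv_inv]
  · intro hx
    obtain ⟨k, t, htS, rfl⟩ := Set.mem_iUnion.mp hx
    obtain ⟨ht0, ht1⟩ := hS1 htS
    refine ⟨?_, branch_image_subset' hS1 k ⟨t, htS, rfl⟩⟩
    show gaussMap (((k:ℝ)+1+t)⁻¹) ∈ S
    have h1 : gaussMap (((k:ℝ)+1+t)⁻¹) = Int.fract ((k:ℝ)+1+t) := by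
      rw [gaussMap, inv_inv]
    have h2 : (k:ℝ)+1+t = ((k+1 : ℕ):ℝ) + t := by push_cast; ring
    rw [h1, h2, Int.fract_natCast_add, Int.fract_eq_self.mpr ⟨le_of_lt ht0, ht1⟩]
    exact htS

section Part2

lemma branch_hasDeriv (k : ℕ) {S : Set ℝ} (hS1 : S ⊆ Set.Ioo 0 1) :
    ∀ t ∈ S, HasDerivWithinAt (fun t => ((k:ℝ)+1+t)⁻¹) (-((((k:ℝ)+1+t)^2)⁻¹)) S t := by
  intro t htS
  obtain ⟨ht0, ht1⟩ := hS1 htS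
  have hne : ((k:ℝ)+1+t) ≠ 0 := by positivity
  have h1 : HasDerivAt (fun t : ℝ => (k:ℝ)+1+t) 1 t := by
    simpa using (hasDerivAt_id t).const_add ((k:ℝ)+1)
  have h2 := (hasDerivAt_inv hne).comp t h1
  simpa [Function.comp_def] using h2.hasDerivWithinAt

lemma branch_injOn (k : ℕ) (S : Set ℝ) :
    Set.InjOn (fun t => ((k:ℝ)+1+t)⁻¹) S := by
  intro a _ b _ hab
  have := inv_injective hab
  linarith

lemma gmu_image_branch {S : Set ℝ} (hS : MeasurableSet S) (hS1 : S ⊆ Set.Ioo 0 1) (k : ℕ) :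
    gmu ((fun t => ((k:ℝ)+1+t)⁻¹) '' S)
      = ∫⁻ t in S, ENNReal.ofReal ((((k:ℝ)+1+t) * ((k:ℝ)+2+t))⁻¹) := by
  have hderiv := branch_hasDeriv k hS1
  have hinj := branch_injOn k S
  have himg : MeasurableSet ((fun t => ((k:ℝ)+1+t)⁻¹) '' S) := by
    have hderiv' : ∀ t ∈ S, HasFDerivWithinAt (fun t => ((k:ℝ)+1+t)⁻¹)
        ((1 : ℝ →L[ℝ] ℝ).smulRight (-((((k:ℝ)+1+t)^2)⁻¹))) S t :=
      fun t ht => (hderiv t ht).hasFDerivWithinAt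
    exact measurable_image_of_fderivWithin hS hderiv' hinj
  rw [gmu_apply himg, Set.inter_eq_self_of_subset_left (branch_image_subset' hS1 k)]
  have := lintegral_image_eq_lintegral_abs_det_fderiv_mul volume hS
    (fun t ht => (hderiv t ht).hasFDerivWithinAt) hinj gdens
  rw [this]
  apply setLIntegral_congr_fun hS
  intro t htS
  obtain ⟨ht0, ht1⟩ := hS1 htS
  have hpos : (0:ℝ) < (k:ℝ)+1+t := by positivity
  beta_reduce
  rw [ContinuousLinearMap.det_toSpanSingleton]
  have habs : |(-((((k:ℝ)+1+t)^2)⁻¹))| = (((k:ℝ)+1+t)^2)⁻¹ := by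
    rw [abs_neg, abs_of_pos]; positivity
  rw [habs, gdens]
  rw [← ENNReal.ofReal_mul (by positivity)]
  congr 1
  have h2 : (0:ℝ) < 1 + ((k:ℝ)+1+t)⁻¹ := by positivity
  field_simp
  ring

lemma telescope {t : ℝ} (ht : 0 < t) :
    ∑' k : ℕ, ENNReal.ofReal ((((k:ℝ)+1+t) * ((k:ℝ)+2+t))⁻¹) = ENNReal.ofReal ((1+t)⁻¹) := by
  have hps : ∀ n : ℕ, ∑ k ∈ Finset.range n, ENNReal.ofReal ((((k:ℝ)+1+t) * ((k:ℝ)+2+t))⁻¹)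
      = ENNReal.ofReal ((1+t)⁻¹ - ((n:ℝ)+1+t)⁻¹) := by
    intro n
    rw [← ENNReal.ofReal_sum_of_nonneg (fun k _ => by positivity)]
    congr 1
    have hterm : ∀ k ∈ Finset.range n, ((((k:ℝ)+1+t) * ((k:ℝ)+2+t))⁻¹)
        = (fun i : ℕ => ((i:ℝ)+1+t)⁻¹) k - (fun i : ℕ => ((i:ℝ)+1+t)⁻¹) (k+1) := by
      intro k _
      have h1 : (0:ℝ) < (k:ℝ)+1+t := by positivity
      have h2 : (0:ℝ) < (k:ℝ)+2+t := by positivity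
      simp only [Nat.cast_add, Nat.cast_one]
      rw [eq_sub_iff_add_eq]
      field_simp
      ring
    rw [Finset.sum_congr rfl hterm, Finset.sum_range_sub' (f := fun i : ℕ => ((i:ℝ)+1+t)⁻¹) n]
    norm_num
  have hlim : Tendsto (fun n : ℕ => ENNReal.ofReal ((1+t)⁻¹ - ((n:ℝ)+1+t)⁻¹)) atTop
      (nhds (ENNReal.ofReal ((1+t)⁻¹))) := by
    have h0 : Tendsto (fun n : ℕ => ((n:ℝ)+1+t)⁻¹) atTop (nhds 0) := by
      apply Tendsto.comp tendsto_inv_atTop_zero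
      apply tendsto_atTop_add_const_right
      apply tendsto_atTop_add_const_right
      exact tendsto_natCast_atTop_atTop
    have : Tendsto (fun n : ℕ => (1+t)⁻¹ - ((n:ℝ)+1+t)⁻¹) atTop (nhds ((1+t)⁻¹)) := by
      simpa using tendsto_const_nhds.sub h0
    exact (ENNReal.continuous_ofReal.tendsto _).comp this
  have h2 := ENNReal.tendsto_nat_tsum
    (fun k : ℕ => ENNReal.ofReal ((((k:ℝ)+1+t) * ((k:ℝ)+2+t))⁻¹))
  rw [funext hps] at h2
  exact tendsto_nhds_unique h2 hlim

end Part2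

section Part3

lemma branch_measurable {S : Set ℝ} (hS : MeasurableSet S) (hS1 : S ⊆ Set.Ioo 0 1) (k : ℕ) :
    MeasurableSet ((fun t => ((k:ℝ)+1+t)⁻¹) '' S) := by
  have hderiv' : ∀ t ∈ S, HasFDerivWithinAt (fun t => ((k:ℝ)+1+t)⁻¹)
      ((1 : ℝ →L[ℝ] ℝ).smulRight (-((((k:ℝ)+1+t)^2)⁻¹))) S t :=
    fun t ht => (branch_hasDeriv k hS1 t ht).hasFDerivWithinAt
  exact measurable_image_of_fderivWithin hS hderiv' (branch_injOn k S)

lemma branch_disjoint {S : Set ℝ} (hS1 : S ⊆ Set.Ioo 0 1) :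
    Pairwise (Function.onFun Disjoint (fun k : ℕ => (fun t => ((k:ℝ)+1+t)⁻¹) '' S)) := by
  have key : ∀ k l : ℕ, k < l →
      Disjoint ((fun t => ((k:ℝ)+1+t)⁻¹) '' S) ((fun t => ((l:ℝ)+1+t)⁻¹) '' S) := by
    intro k l hkl
    rw [Set.disjoint_left]
    intro x hxk hxl
    obtain ⟨hk1, _⟩ := branch_image_subset hS1 k hxk
    obtain ⟨_, hl2⟩ := branch_image_subset hS1 l hxl
    have hle : ((l:ℝ)+1)⁻¹ ≤ ((k:ℝ)+2)⁻¹ := by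
      apply inv_anti₀ (by positivity)
      have : (k:ℝ) + 1 ≤ l := by exact_mod_cast hkl
      linarith
    linarith
  intro k l hkl
  rcases hkl.lt_or_gt with h | h
  · exact key k l h
  · exact (key l k h).symm

lemma gmu_preimage_core {S : Set ℝ} (hS : MeasurableSet S) (hS1 : S ⊆ Set.Ioo 0 1) :
    gmu (gaussMap ⁻¹' S) = gmu S := by
  have hpre : MeasurableSet (gaussMap ⁻¹' S) := measurable_gaussMap hS
  rw [gmu_inter hpre, branch_decomp hS1,
    measure_iUnion (branch_disjoint hS1) (fun k => branch_measurable hS hS1 k)]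
  have h1 : ∀ k : ℕ, gmu ((fun t => ((k:ℝ)+1+t)⁻¹) '' S)
      = ∫⁻ t in S, ENNReal.ofReal ((((k:ℝ)+1+t) * ((k:ℝ)+2+t))⁻¹) :=
    fun k => gmu_image_branch hS hS1 k
  rw [tsum_congr h1, ← lintegral_tsum (fun k => Measurable.aemeasurable (by fun_prop))]
  rw [gmu_apply hS, Set.inter_eq_self_of_subset_left hS1]
  apply setLIntegral_congr_fun hS
  intro t htS
  exact telescope (hS1 htS).1

lemma gmu_preimage {S : Set ℝ} (hS : MeasurableSet S) :
    gmu (gaussMap ⁻¹' S) = gmu S := by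
  have hI : MeasurableSet (Set.Ioo (0:ℝ) 1) := measurableSet_Ioo
  have hcnt : (gaussMap ⁻¹' {0} : Set ℝ).Countable := by
    apply Set.Countable.mono _ (Set.countable_range (fun m : ℤ => ((m:ℝ))⁻¹))
    intro x hx
    have h0 : Int.fract x⁻¹ = 0 := hx
    have h1 : x⁻¹ = ((⌊x⁻¹⌋ : ℤ) : ℝ) := by
      have := Int.floor_add_fract x⁻¹
      rw [h0] at this; linarith
    refine ⟨⌊x⁻¹⌋, ?_⟩
    show ((⌊x⁻¹⌋:ℤ):ℝ)⁻¹ = x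
    rw [← h1, inv_inv]
  have hA : MeasurableSet (gaussMap ⁻¹' S ∩ Set.Ioo 0 1) :=
    (measurable_gaussMap hS).inter hI
  have hsub1 : gaussMap ⁻¹' S ∩ Set.Ioo 0 1 ⊆
      (gaussMap ⁻¹' (S ∩ Set.Ioo 0 1) ∩ Set.Ioo 0 1) ∪ gaussMap ⁻¹' {0} := by
    rintro x ⟨hxS, hxI⟩
    by_cases h : gaussMap x ∈ Set.Ioo (0:ℝ) 1
    · exact Or.inl ⟨⟨hxS, h⟩, hxI⟩
    · right
      have h0 : 0 ≤ gaussMap x := Int.fract_nonneg _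
      have h1 : gaussMap x < 1 := Int.fract_lt_one _
      have : gaussMap x = 0 := by
        by_contra hne
        exact h ⟨lt_of_le_of_ne h0 (Ne.symm hne), h1⟩
      simpa [Set.mem_preimage] using this
  have hsub2 : gaussMap ⁻¹' (S ∩ Set.Ioo 0 1) ∩ Set.Ioo 0 1 ⊆
      gaussMap ⁻¹' S ∩ Set.Ioo 0 1 := by
    rintro x ⟨hx1, hx2⟩
    exact ⟨hx1.1, hx2⟩
  have heq : gmu (gaussMap ⁻¹' S ∩ Set.Ioo 0 1)
      = gmu (gaussMap ⁻¹' (S ∩ Set.Ioo 0 1) ∩ Set.Ioo 0 1) := by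
    apply le_antisymm
    · calc gmu (gaussMap ⁻¹' S ∩ Set.Ioo 0 1)
          ≤ gmu ((gaussMap ⁻¹' (S ∩ Set.Ioo 0 1) ∩ Set.Ioo 0 1) ∪ gaussMap ⁻¹' {0}) :=
            measure_mono hsub1
        _ ≤ gmu (gaussMap ⁻¹' (S ∩ Set.Ioo 0 1) ∩ Set.Ioo 0 1) + gmu (gaussMap ⁻¹' {0}) :=
            measure_union_le _ _
        _ = gmu (gaussMap ⁻¹' (S ∩ Set.Ioo 0 1) ∩ Set.Ioo 0 1) := by
            rw [gmu_null hcnt, add_zero]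
    · exact measure_mono hsub2
  calc gmu (gaussMap ⁻¹' S) = gmu (gaussMap ⁻¹' S ∩ Set.Ioo 0 1) :=
        gmu_inter (measurable_gaussMap hS)
    _ = gmu (gaussMap ⁻¹' (S ∩ Set.Ioo 0 1) ∩ Set.Ioo 0 1) := heq
    _ = gmu (gaussMap ⁻¹' (S ∩ Set.Ioo 0 1)) :=
        (gmu_inter (measurable_gaussMap (hS.inter hI))).symm
    _ = gmu (S ∩ Set.Ioo 0 1) := gmu_preimage_core (hS.inter hI) Set.inter_subset_right
    _ = gmu S := (gmu_inter hS).symm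

lemma gmu_preimage_iter (j : ℕ) {S : Set ℝ} (hS : MeasurableSet S) :
    gmu (gaussMap^[j] ⁻¹' S) = gmu S := by
  induction j with
  | zero => simp
  | succ j ih =>
    rw [Function.iterate_succ, Set.preimage_comp, gmu_preimage (measurable_gaussMap.iterate j hS)]
    exact ih

lemma rho_le_two_gmu {A : Set ℝ} (hA : MeasurableSet A) : rho A ≤ 2 * gmu A := by
  rw [gmu_apply hA, rho, Measure.restrict_apply hA]
  have h1 : volume (A ∩ Set.Ioo (0:ℝ) 1)
      = ∫⁻ _x in A ∩ Set.Ioo (0:ℝ) 1, 1 := by simp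
  rw [h1, ← lintegral_const_mul 2 measurable_gdens]
  apply setLIntegral_mono (measurable_const.mul measurable_gdens)
  intro x hx
  have hx0 : (0:ℝ) < x := hx.2.1
  have hx1 : x < 1 := hx.2.2
  have h2 : (2:ℝ≥0∞) * gdens x = ENNReal.ofReal (2 * (1+x)⁻¹) := by
    rw [gdens, ENNReal.ofReal_mul (by norm_num), ENNReal.ofReal_ofNat]
  show (1:ℝ≥0∞) ≤ 2 * gdens x
  rw [h2]
  have h3 : (1:ℝ) ≤ 2 * (1+x)⁻¹ := by
    rw [le_mul_inv_iff₀ (by linarith : (0:ℝ) < 1+x)]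
    linarith
  calc (1:ℝ≥0∞) = ENNReal.ofReal 1 := by norm_num
    _ ≤ ENNReal.ofReal (2 * (1+x)⁻¹) := ENNReal.ofReal_le_ofReal h3

lemma gmu_le_rho {A : Set ℝ} (hA : MeasurableSet A) : gmu A ≤ rho A := by
  rw [gmu_apply hA, rho, Measure.restrict_apply hA]
  have h1 : volume (A ∩ Set.Ioo (0:ℝ) 1)
      = ∫⁻ _x in A ∩ Set.Ioo (0:ℝ) 1, 1 := by simp
  rw [h1]
  apply setLIntegral_mono measurable_const
  intro x hx
  have hx0 : (0:ℝ) < x := hx.2.1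
  rw [gdens]
  calc ENNReal.ofReal (1+x)⁻¹ ≤ ENNReal.ofReal 1 := by
        apply ENNReal.ofReal_le_ofReal
        rw [inv_le_one_iff₀]; right; linarith
    _ = 1 := by norm_num

end Part3

section Part4

noncomputable def Yq (j : ℕ) (α : ℝ) : ℕ := ⌊(gaussMap^[j] α)⁻¹⌋₊

lemma measurable_Yq (j : ℕ) : Measurable (Yq j) :=
  Nat.measurable_floor.comp (measurable_gaussMap.iterate j).inv

lemma Yq_set_measurable (j m : ℕ) : MeasurableSet {α : ℝ | m ≤ Yq j α} :=
  (measurable_Yq j) (measurableSet_Ici : MeasurableSet (Set.Ici m))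

lemma tail_bound (j m : ℕ) (hm : 1 ≤ m) :
    rho {α | m ≤ Yq j α} ≤ 2 * ENNReal.ofReal (1/(m:ℝ)) := by
  set T : Set ℝ := {y : ℝ | m ≤ ⌊y⁻¹⌋₊} with hTdef
  have hT : MeasurableSet T :=
    (Nat.measurable_floor.comp measurable_inv) (measurableSet_Ici : MeasurableSet (Set.Ici m))
  have hset : {α : ℝ | m ≤ Yq j α} = gaussMap^[j] ⁻¹' T := rfl
  have hsub : T ∩ Set.Ioo 0 1 ⊆ Set.Ioc 0 (1/(m:ℝ)) := by
    rintro y ⟨hyT, hy0, hy1⟩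
    have hfl : (m:ℝ) ≤ y⁻¹ := by
      have := (Nat.le_floor_iff (by positivity : (0:ℝ) ≤ y⁻¹)).mp hyT
      exact this
    refine ⟨hy0, ?_⟩
    have hmpos : (0:ℝ) < m := by exact_mod_cast hm
    rw [one_div]
    calc y = (y⁻¹)⁻¹ := (inv_inv y).symm
      _ ≤ (m:ℝ)⁻¹ := inv_anti₀ hmpos hfl
  calc rho {α | m ≤ Yq j α} ≤ 2 * gmu (gaussMap^[j] ⁻¹' T) := by
        rw [hset]; exact rho_le_two_gmu ((measurable_gaussMap.iterate j) hT)
    _ = 2 * gmu T := by rw [gmu_preimage_iter j hT]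
    _ ≤ 2 * rho T := by gcongr 2 * ?_; exact gmu_le_rho hT
    _ ≤ 2 * ENNReal.ofReal (1/(m:ℝ)) := by
        gcongr
        rw [rho, Measure.restrict_apply hT]
        calc volume (T ∩ Set.Ioo 0 1) ≤ volume (Set.Ioc 0 (1/(m:ℝ))) := measure_mono hsub
          _ = ENNReal.ofReal (1/(m:ℝ)) := by rw [Real.volume_Ioc, sub_zero]

lemma min_cast_eq_sum (Y M : ℕ) :
    ((min Y M : ℕ) : ℝ≥0∞) = ∑ m ∈ Finset.Icc 1 M, (if m ≤ Y then (1:ℝ≥0∞) else 0) := by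
  have h1 : ∀ m ∈ Finset.Icc 1 M,
      (if m ≤ Y then (1:ℝ≥0∞) else 0) = (if m ∈ Finset.Icc 1 (min Y M) then (1:ℝ≥0∞) else 0) := by
    intro m hm
    rw [Finset.mem_Icc] at hm
    congr 1
    rw [eq_iff_iff, Finset.mem_Icc]
    constructor
    · intro h; exact ⟨hm.1, le_min h hm.2⟩
    · intro h; exact le_trans h.2 (min_le_left _ _)
  rw [Finset.sum_congr rfl h1, Finset.sum_ite_mem,
    Finset.inter_eq_right.mpr (Finset.Icc_subset_Icc le_rfl (min_le_right _ _)),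
    Finset.sum_const, Nat.card_Icc]
  simp

lemma harmonic_bound : ∀ K : ℕ,
    ∑ m ∈ Finset.Icc (1:ℕ) (2^K), ENNReal.ofReal (1/(m:ℝ)) ≤ (K+1 : ℝ≥0∞) := by
  intro K
  induction K with
  | zero => simp
  | succ K ih =>
    have hsplit : Finset.Icc (1:ℕ) (2^(K+1)) = Finset.Icc (1:ℕ) (2^K) ∪ Finset.Ioc ((2:ℕ)^K) (2^(K+1)) := by
      ext a
      simp only [Finset.mem_Icc, Finset.mem_union, Finset.mem_Ioc]
      have h2 : (2:ℕ)^K ≤ 2^(K+1) := Nat.pow_le_pow_right (by norm_num) (Nat.le_succ K)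
      omega
    have hdisj : Disjoint (Finset.Icc (1:ℕ) (2^K)) (Finset.Ioc ((2:ℕ)^K) (2^(K+1))) := by
      rw [Finset.disjoint_left]
      intro a ha hb
      rw [Finset.mem_Icc] at ha
      rw [Finset.mem_Ioc] at hb
      omega
    rw [hsplit, Finset.sum_union hdisj]
    have h2 : ∑ m ∈ Finset.Ioc ((2:ℕ)^K) (2^(K+1)), ENNReal.ofReal (1/(m:ℝ)) ≤ 1 := by
      have hterm : ∀ m ∈ Finset.Ioc ((2:ℕ)^K) (2^(K+1)),
          ENNReal.ofReal (1/(m:ℝ)) ≤ ((2:ℝ≥0∞)^K)⁻¹ := by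
        intro m hm
        rw [Finset.mem_Ioc] at hm
        have hm2 : (2:ℝ)^K ≤ (m:ℝ) := by
          have h : (2^K : ℕ) ≤ m := le_of_lt hm.1
          exact_mod_cast h
        have hpos : (0:ℝ) < 2^K := by positivity
        calc ENNReal.ofReal (1/(m:ℝ)) ≤ ENNReal.ofReal (((2:ℝ)^K)⁻¹) := by
              apply ENNReal.ofReal_le_ofReal
              rw [one_div]
              exact inv_anti₀ hpos hm2
          _ = ((2:ℝ≥0∞)^K)⁻¹ := by
              rw [ENNReal.ofReal_inv_of_pos hpos]
              congr 1
              rw [ENNReal.ofReal_pow (by norm_num)]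
              norm_num
      calc ∑ m ∈ Finset.Ioc ((2:ℕ)^K) (2^(K+1)), ENNReal.ofReal (1/(m:ℝ))
          ≤ ∑ _m ∈ Finset.Ioc ((2:ℕ)^K) (2^(K+1)), ((2:ℝ≥0∞)^K)⁻¹ := Finset.sum_le_sum hterm
        _ = (Finset.Ioc ((2:ℕ)^K) (2^(K+1))).card • ((2:ℝ≥0∞)^K)⁻¹ := by rw [Finset.sum_const]
        _ = ((2:ℝ≥0∞)^K) * ((2:ℝ≥0∞)^K)⁻¹ := by
            rw [Nat.card_Ioc, nsmul_eq_mul]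
            congr 1
            have : 2^(K+1) - 2^K = 2^K := by
              rw [pow_succ]; omega
            rw [this]
            norm_num
        _ = 1 := ENNReal.mul_inv_cancel (pow_ne_zero K (by norm_num)) (by simp)
    calc ∑ m ∈ Finset.Icc (1:ℕ) (2^K), ENNReal.ofReal (1/(m:ℝ))
          + ∑ m ∈ Finset.Ioc ((2:ℕ)^K) (2^(K+1)), ENNReal.ofReal (1/(m:ℝ))
        ≤ (K+1 : ℝ≥0∞) + 1 := add_le_add ih h2
      _ = ((K+1 : ℕ) : ℝ≥0∞) + 1 := by push_cast; ring

lemma lintegral_min_le (j K : ℕ) :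
    ∫⁻ α, ((min (Yq j α) (2^K) : ℕ) : ℝ≥0∞) ∂rho ≤ 2 * (K+1 : ℝ≥0∞) := by
  have hrw : ∀ α, ((min (Yq j α) (2^K) : ℕ) : ℝ≥0∞)
      = ∑ m ∈ Finset.Icc (1:ℕ) (2^K), Set.indicator {α' | m ≤ Yq j α'} (fun _ => (1:ℝ≥0∞)) α := by
    intro α
    rw [min_cast_eq_sum]
    apply Finset.sum_congr rfl
    intro m _
    rw [Set.indicator_apply]
    rfl
  calc ∫⁻ α, ((min (Yq j α) (2^K) : ℕ) : ℝ≥0∞) ∂rho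
      = ∑ m ∈ Finset.Icc (1:ℕ) (2^K), ∫⁻ α, Set.indicator {α' | m ≤ Yq j α'} (fun _ => (1:ℝ≥0∞)) α ∂rho := by
        rw [← lintegral_finset_sum]
        · exact lintegral_congr hrw
        · intro m _
          exact (measurable_const (a := (1:ℝ≥0∞))).indicator (Yq_set_measurable j m)
    _ = ∑ m ∈ Finset.Icc (1:ℕ) (2^K), rho {α' | m ≤ Yq j α'} := by
        apply Finset.sum_congr rfl
        intro m _
        rw [lintegral_indicator (Yq_set_measurable j m)]
        simp
    _ ≤ ∑ m ∈ Finset.Icc (1:ℕ) (2^K), 2 * ENNReal.ofReal (1/(m:ℝ)) :=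
        Finset.sum_le_sum (fun m hm => tail_bound j m (Finset.mem_Icc.mp hm).1)
    _ = 2 * ∑ m ∈ Finset.Icc (1:ℕ) (2^K), ENNReal.ofReal (1/(m:ℝ)) := by
        rw [Finset.mul_sum]
    _ ≤ 2 * (K+1 : ℝ≥0∞) := by gcongr; exact harmonic_bound K

end Part4

section Part5

/-- Truncation level for block `k`. -/
def Mtr (k : ℕ) : ℕ := 2^(3*k)

/-- Log weight. -/
def Lg (k : ℕ) : ℕ := Nat.log 2 k + 1

/-- Threshold for block `k`. -/
def Bth (k : ℕ) : ℕ := 2^(k+2) * (3*k+1) * Lg k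

/-- Weight of block `k`. -/
noncomputable def cwt (k : ℕ) : ℝ≥0∞ := (2^k : ℝ≥0∞) / (Bth k : ℝ≥0∞)

lemma cwt_eq (k : ℕ) : cwt k = (((4*(3*k+1)*Lg k : ℕ) : ℝ≥0∞))⁻¹ := by
  have hB : (Bth k : ℝ≥0∞) = (2^k : ℝ≥0∞) * ((4*(3*k+1)*Lg k : ℕ) : ℝ≥0∞) := by
    rw [Bth]
    push_cast
    ring
  rw [cwt, hB]
  rw [ENNReal.div_eq_inv_mul, ENNReal.mul_inv (Or.inl (by positivity)) (Or.inl (by simp))]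
  rw [mul_comm ((2^k : ℝ≥0∞))⁻¹ _, mul_assoc, ENNReal.inv_mul_cancel (by positivity) (by simp),
    mul_one]

/-- The truncated Birkhoff-type sum over block `k`. -/
noncomputable def Ftr (k : ℕ) (α : ℝ) : ℝ≥0∞ :=
  ∑ j ∈ Finset.range (2^(k+1)), ((min (Yq j α) (Mtr k) : ℕ) : ℝ≥0∞)

lemma measurable_Ftr (k : ℕ) : Measurable (Ftr k) := by
  apply Finset.measurable_sum
  intro j _
  have : Measurable (fun n : ℕ => ((min n (Mtr k) : ℕ) : ℝ≥0∞)) := measurable_from_top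
  exact this.comp (measurable_Yq j)

/-- Bad event A : some huge partial quotient in the block. -/
def badA (k : ℕ) : Set ℝ := ⋃ j ∈ Finset.range (2^(k+1)), {α | Mtr k + 1 ≤ Yq j α}

/-- Bad event B : truncated sum too large. -/
noncomputable def badB (k : ℕ) : Set ℝ := {α | (Bth k : ℝ≥0∞) < Ftr k α}

def badSet (k : ℕ) : Set ℝ := badA k ∪ badB k

lemma measurable_badA (k : ℕ) : MeasurableSet (badA k) :=
  Finset.measurableSet_biUnion _ (fun j _ => Yq_set_measurable j (Mtr k + 1))

lemma measurable_badB (k : ℕ) : MeasurableSet (badB k) :=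
  measurableSet_lt measurable_const (measurable_Ftr k)

lemma measurable_badSet (k : ℕ) : MeasurableSet (badSet k) :=
  (measurable_badA k).union (measurable_badB k)

lemma rho_badA_le (k : ℕ) :
    rho (badA k) ≤ 2^(k+2) * ENNReal.ofReal (1/((Mtr k + 1 : ℕ) : ℝ)) := by
  calc rho (badA k) ≤ ∑ j ∈ Finset.range (2^(k+1)), rho {α | Mtr k + 1 ≤ Yq j α} :=
        measure_biUnion_finset_le _ _
    _ ≤ ∑ _j ∈ Finset.range (2^(k+1)), 2 * ENNReal.ofReal (1/((Mtr k + 1 : ℕ) : ℝ)) :=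
        Finset.sum_le_sum (fun j _ => tail_bound j (Mtr k + 1) (Nat.le_add_left 1 _))
    _ = (2^(k+1) : ℕ) * (2 * ENNReal.ofReal (1/((Mtr k + 1 : ℕ) : ℝ))) := by
        rw [Finset.sum_const, Finset.card_range, nsmul_eq_mul]
    _ = 2^(k+2) * ENNReal.ofReal (1/((Mtr k + 1 : ℕ) : ℝ)) := by
        push_cast
        ring

lemma lintegral_Ftr_le (k : ℕ) :
    ∫⁻ α, Ftr k α ∂rho ≤ 2^(k+2) * ((3*k+1 : ℕ) : ℝ≥0∞) := by
  calc ∫⁻ α, (∑ j ∈ Finset.range (2^(k+1)), ((min (Yq j α) (Mtr k) : ℕ) : ℝ≥0∞)) ∂rho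
      = ∑ j ∈ Finset.range (2^(k+1)), ∫⁻ α, ((min (Yq j α) (Mtr k) : ℕ) : ℝ≥0∞) ∂rho := by
        apply lintegral_finset_sum
        intro j _
        exact (measurable_from_top (f := fun n : ℕ => ((min n (Mtr k) : ℕ) : ℝ≥0∞))).comp
          (measurable_Yq j)
    _ ≤ ∑ _j ∈ Finset.range (2^(k+1)), 2 * ((3*k : ℕ) + 1 : ℝ≥0∞) := by
        apply Finset.sum_le_sum
        intro j _
        exact lintegral_min_le j (3*k)
    _ = (2^(k+1) : ℕ) * (2 * ((3*k : ℕ) + 1 : ℝ≥0∞)) := by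
        rw [Finset.sum_const, Finset.card_range, nsmul_eq_mul]
    _ = 2^(k+2) * ((3*k+1 : ℕ) : ℝ≥0∞) := by
        push_cast
        ring

lemma rho_badB_le (k : ℕ) :
    rho (badB k) ≤ (((Lg k : ℕ)) : ℝ≥0∞)⁻¹ := by
  have hB0 : ((Bth k : ℕ) : ℝ≥0∞) ≠ 0 := by
    simp [Bth, Lg]
  have hBtop : ((Bth k : ℕ) : ℝ≥0∞) ≠ ⊤ := by simp
  have hsub : badB k ⊆ {α | ((Bth k : ℕ) : ℝ≥0∞) ≤ Ftr k α} := by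
    intro α hα
    have h : ((Bth k : ℕ) : ℝ≥0∞) < Ftr k α := hα
    exact h.le
  calc rho (badB k) ≤ rho {α | ((Bth k : ℕ) : ℝ≥0∞) ≤ Ftr k α} := measure_mono hsub
    _ ≤ (∫⁻ α, Ftr k α ∂rho) / ((Bth k : ℕ) : ℝ≥0∞) :=
        meas_ge_le_lintegral_div (measurable_Ftr k).aemeasurable hB0 hBtop
    _ ≤ (2^(k+2) * ((3*k+1 : ℕ) : ℝ≥0∞)) / ((Bth k : ℕ) : ℝ≥0∞) := by
        gcongr
        exact lintegral_Ftr_le k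
    _ = (((Lg k : ℕ)) : ℝ≥0∞)⁻¹ := by
        have hB : ((Bth k : ℕ) : ℝ≥0∞)
            = (2^(k+2) * ((3*k+1 : ℕ) : ℝ≥0∞)) * ((Lg k : ℕ) : ℝ≥0∞) := by
          rw [Bth]; push_cast; ring
        rw [hB]
        have hD0 : (2^(k+2) * ((3*k+1 : ℕ) : ℝ≥0∞)) ≠ 0 :=
          mul_ne_zero (pow_ne_zero _ (by norm_num)) (Nat.cast_ne_zero.mpr (by omega))
        have hDtop : (2^(k+2) * ((3*k+1 : ℕ) : ℝ≥0∞)) ≠ ⊤ :=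
          ENNReal.mul_ne_top (ENNReal.pow_ne_top (by simp)) (ENNReal.natCast_ne_top _)
        calc (2^(k+2) * ((3*k+1 : ℕ) : ℝ≥0∞))
              / ((2^(k+2) * ((3*k+1 : ℕ) : ℝ≥0∞)) * ((Lg k : ℕ) : ℝ≥0∞))
            = ((2^(k+2) * ((3*k+1 : ℕ) : ℝ≥0∞)) * 1)
              / ((2^(k+2) * ((3*k+1 : ℕ) : ℝ≥0∞)) * ((Lg k : ℕ) : ℝ≥0∞)) := by rw [mul_one]
          _ = 1 / ((Lg k : ℕ) : ℝ≥0∞) := ENNReal.mul_div_mul_left _ _ hD0 hDtop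
          _ = (((Lg k : ℕ)) : ℝ≥0∞)⁻¹ := one_div _

end Part5

section Part6

lemma blocks_eq (a : ℕ → ℝ≥0∞) (M : ℕ) :
    ∑ m ∈ Finset.range M, ∑ k ∈ Finset.Ioc (2^m) (2^(m+1)), a k
      = ∑ k ∈ Finset.Ioc 1 (2^M), a k := by
  induction M with
  | zero => simp
  | succ M ih =>
    rw [Finset.sum_range_succ, ih,
      Finset.sum_Ioc_consecutive a Nat.one_le_two_pow
        (Nat.pow_le_pow_right (by norm_num) (Nat.le_succ M))]

lemma blocks_le_tsum (a : ℕ → ℝ≥0∞) :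
    ∑' m, ∑ k ∈ Finset.Ioc (2^m) (2^(m+1)), a k ≤ ∑' k, a k := by
  rw [ENNReal.tsum_eq_iSup_nat]
  apply iSup_le
  intro M
  rw [blocks_eq]
  exact ENNReal.sum_le_tsum _

lemma tsum_le_blocks (a : ℕ → ℝ≥0∞) :
    ∑' k, a k ≤ a 0 + a 1 + ∑' m, ∑ k ∈ Finset.Ioc (2^m) (2^(m+1)), a k := by
  rw [ENNReal.tsum_eq_iSup_sum]
  apply iSup_le
  intro s
  obtain ⟨n, hn⟩ := s.exists_nat_subset_range
  have hdisj : Disjoint (Finset.range 2) (Finset.Ioc 1 (2^n)) := by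
    rw [Finset.disjoint_left]
    intro a ha hb
    rw [Finset.mem_range] at ha
    rw [Finset.mem_Ioc] at hb
    omega
  calc ∑ k ∈ s, a k ≤ ∑ k ∈ Finset.range n, a k := Finset.sum_le_sum_of_subset hn
    _ ≤ ∑ k ∈ Finset.range 2 ∪ Finset.Ioc 1 (2^n), a k := by
        apply Finset.sum_le_sum_of_subset
        intro k hk
        rw [Finset.mem_range] at hk
        rw [Finset.mem_union, Finset.mem_range, Finset.mem_Ioc]
        rcases lt_or_ge k 2 with h | h
        · exact Or.inl h
        · exact Or.inr ⟨by omega, le_trans (le_of_lt hk) (le_of_lt (Nat.lt_two_pow_self (n := n)))⟩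
    _ = ∑ k ∈ Finset.range 2, a k + ∑ k ∈ Finset.Ioc 1 (2^n), a k := Finset.sum_union hdisj
    _ ≤ a 0 + a 1 + ∑' m, ∑ k ∈ Finset.Ioc (2^m) (2^(m+1)), a k := by
        rw [Finset.sum_range_succ, Finset.sum_range_one, ← blocks_eq a n]
        exact add_le_add le_rfl (ENNReal.sum_le_tsum _)

lemma harmonic_ennreal : ∑' m : ℕ, (((m+2 : ℕ)) : ℝ≥0∞)⁻¹ = ⊤ := by
  by_contra h
  have hcoe : ∀ m : ℕ, (((m+2 : ℕ)) : ℝ≥0∞)⁻¹ = ((((m+2 : ℕ) : ℝ≥0))⁻¹ : ℝ≥0) := by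
    intro m
    rw [ENNReal.coe_inv (by exact_mod_cast Nat.succ_ne_zero (m+1))]
    simp
  rw [tsum_congr hcoe] at h
  have hsum : Summable (fun m : ℕ => (((m+2 : ℕ) : ℝ≥0))⁻¹) :=
    ENNReal.tsum_coe_ne_top_iff_summable.mp h
  have hsum2 : Summable (fun m : ℕ => 1 / ((m+2 : ℕ) : ℝ)) := by
    have := NNReal.summable_coe.mpr hsum
    simpa [one_div] using this
  have : Summable (fun n : ℕ => 1 / (n : ℝ)) := (summable_nat_add_iff 2).mp hsum2
  exact Real.not_summable_one_div_natCast this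

lemma cwt_lower {m k : ℕ} (hk2 : k ≤ 2^(m+1)) :
    (((2^(m+5) * (m+2) : ℕ)) : ℝ≥0∞)⁻¹ ≤ cwt k := by
  rw [cwt_eq]
  rw [ENNReal.inv_le_inv]
  apply Nat.cast_le.mpr
  have hL : Lg k ≤ m+2 := by
    rw [Lg]
    have h1 : Nat.log 2 k ≤ m+1 := by
      calc Nat.log 2 k ≤ Nat.log 2 (2^(m+1)) := Nat.log_mono_right hk2
        _ = m+1 := Nat.log_pow (by norm_num) _
    omega
  have h1 : 1 ≤ 2^m := Nat.one_le_two_pow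
  have h3k : 3*k+1 ≤ 2^(m+3) := by
    have h2 : (2:ℕ)^(m+1) = 2*2^m := by ring
    have h3 : (2:ℕ)^(m+3) = 8*2^m := by ring
    omega
  calc 4*(3*k+1)*Lg k ≤ 4*(2^(m+3))*(m+2) := by
        exact Nat.mul_le_mul (Nat.mul_le_mul_left 4 h3k) hL
    _ = 2^(m+5)*(m+2) := by ring

lemma tsum_cwt_top : ∑' k, cwt k = ⊤ := by
  rw [← top_le_iff]
  refine le_trans ?_ (blocks_le_tsum cwt)
  have hblock : ∀ m : ℕ, (((32*(m+2) : ℕ)) : ℝ≥0∞)⁻¹ ≤ ∑ k ∈ Finset.Ioc (2^m) (2^(m+1)), cwt k := by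
    intro m
    have hlow : ∀ k ∈ Finset.Ioc (2^m) (2^(m+1)),
        (((2^(m+5) * (m+2) : ℕ)) : ℝ≥0∞)⁻¹ ≤ cwt k := by
      intro k hk
      exact cwt_lower (Finset.mem_Ioc.mp hk).2
    calc (((32*(m+2) : ℕ)) : ℝ≥0∞)⁻¹
        = (2^m : ℝ≥0∞) * ((((2^(m+5) * (m+2) : ℕ))) : ℝ≥0∞)⁻¹ := by
          have hc : (((2^(m+5) * (m+2) : ℕ)) : ℝ≥0∞)
              = (2^m : ℝ≥0∞) * (((32*(m+2) : ℕ)) : ℝ≥0∞) := by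
            push_cast
            ring
          rw [hc, ENNReal.mul_inv (Or.inl (by positivity)) (Or.inl (ENNReal.pow_ne_top (by simp))),
            ← mul_assoc, ENNReal.mul_inv_cancel (by positivity) (ENNReal.pow_ne_top (by simp)),
            one_mul]
      _ = (Finset.Ioc (2^m) (2^(m+1))).card • ((((2^(m+5) * (m+2) : ℕ))) : ℝ≥0∞)⁻¹ := by
          rw [Nat.card_Ioc, nsmul_eq_mul]
          congr 1
          have : 2^(m+1) - 2^m = 2^m := by
            rw [pow_succ]; omega
          rw [this]
          push_cast
          ring
      _ ≤ ∑ k ∈ Finset.Ioc (2^m) (2^(m+1)), cwt k := by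
          rw [← Finset.sum_const]
          exact Finset.sum_le_sum hlow
  refine le_trans ?_ (ENNReal.tsum_le_tsum hblock)
  rw [top_le_iff]
  have hre : ∀ m : ℕ, (((32*(m+2) : ℕ)) : ℝ≥0∞)⁻¹ = (32 : ℝ≥0∞)⁻¹ * (((m+2 : ℕ)) : ℝ≥0∞)⁻¹ := by
    intro m
    have : (((32*(m+2) : ℕ)) : ℝ≥0∞) = (32 : ℝ≥0∞) * (((m+2:ℕ)) : ℝ≥0∞) := by push_cast; ring
    rw [this, ENNReal.mul_inv (Or.inl (by norm_num)) (Or.inl (by norm_num))]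
  rw [tsum_congr hre, ENNReal.tsum_mul_left, harmonic_ennreal, ENNReal.mul_top]
  simp

end Part6

section Part7

lemma cwt_le_one (k : ℕ) : cwt k ≤ 1 := by
  rw [cwt_eq, ENNReal.inv_le_one]
  have h : 0 < 4*(3*k+1)*Lg k := by
    have : 0 < Lg k := Nat.succ_pos _
    positivity
  exact_mod_cast h

lemma Lg_inv_le_one (k : ℕ) : (((Lg k : ℕ)) : ℝ≥0∞)⁻¹ ≤ 1 := by
  rw [ENNReal.inv_le_one]
  exact_mod_cast Nat.succ_pos _

lemma tsum_s2_ne_top :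
    ∑' k, (2:ℝ≥0∞)^(k+2) * ENNReal.ofReal (1/((Mtr k + 1 : ℕ) : ℝ)) ≠ ⊤ := by
  have hb : ∀ k, (2:ℝ≥0∞)^(k+2) * ENNReal.ofReal (1/((Mtr k + 1 : ℕ) : ℝ))
      ≤ ((4 * ((2:ℝ≥0)^k)⁻¹ : ℝ≥0) : ℝ≥0∞) := by
    intro k
    have h2k0 : ((2:ℝ≥0∞)^k) ≠ 0 := pow_ne_zero _ (by norm_num)
    have h2kt : ((2:ℝ≥0∞)^k) ≠ ⊤ := ENNReal.pow_ne_top (by simp)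
    have h1 : ENNReal.ofReal (1/((Mtr k + 1 : ℕ) : ℝ)) ≤ ((2:ℝ≥0∞)^(3*k))⁻¹ := by
      rw [Mtr]
      calc ENNReal.ofReal (1/(((2^(3*k) + 1 : ℕ)) : ℝ)) ≤ ENNReal.ofReal (((2:ℝ)^(3*k))⁻¹) := by
            apply ENNReal.ofReal_le_ofReal
            rw [one_div]
            apply inv_anti₀ (by positivity)
            push_cast
            linarith
        _ = ((2:ℝ≥0∞)^(3*k))⁻¹ := by
            rw [ENNReal.ofReal_inv_of_pos (by positivity)]
            congr 1
            rw [ENNReal.ofReal_pow (by norm_num)]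
            norm_num
    calc (2:ℝ≥0∞)^(k+2) * ENNReal.ofReal (1/((Mtr k + 1 : ℕ) : ℝ))
        ≤ (2:ℝ≥0∞)^(k+2) * ((2:ℝ≥0∞)^(3*k))⁻¹ := by gcongr
      _ ≤ (2:ℝ≥0∞)^(k+2) * ((2:ℝ≥0∞)^(2*k))⁻¹ := by
          apply mul_le_mul_right
          rw [ENNReal.inv_le_inv]
          exact pow_le_pow_right₀ one_le_two (by omega)
      _ = 4 * ((2:ℝ≥0∞)^k)⁻¹ := by
          have hsplit : ((2:ℝ≥0∞)^(2*k))⁻¹ = ((2:ℝ≥0∞)^k)⁻¹ * ((2:ℝ≥0∞)^k)⁻¹ := by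
            rw [two_mul, pow_add, ENNReal.mul_inv (Or.inl h2k0) (Or.inl h2kt)]
          have hp : (2:ℝ≥0∞)^(k+2) = 4 * (2:ℝ≥0∞)^k := by
            rw [pow_add]; ring
          rw [hsplit, hp, mul_assoc, ← mul_assoc ((2:ℝ≥0∞)^k),
            ENNReal.mul_inv_cancel h2k0 h2kt, one_mul]
      _ = ((4 * ((2:ℝ≥0)^k)⁻¹ : ℝ≥0) : ℝ≥0∞) := by
          rw [ENNReal.coe_mul, ENNReal.coe_inv (pow_ne_zero _ (by norm_num)),
            ENNReal.coe_pow]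
          norm_num
  apply ne_top_of_le_ne_top _ (ENNReal.tsum_le_tsum hb)
  apply ENNReal.tsum_coe_ne_top_iff_summable.2
  have : Summable (fun k : ℕ => 4 * ((2:ℝ≥0)⁻¹)^k) :=
    (NNReal.summable_geometric (by
      rw [inv_lt_one_iff₀]
      norm_num : (2:ℝ≥0)⁻¹ < 1)).mul_left 4
  apply this.congr
  intro k
  rw [inv_pow]

lemma s1_block {m k : ℕ} (hk1 : 2^m < k) :
    cwt k * (((Lg k : ℕ)) : ℝ≥0∞)⁻¹
      ≤ ((((2^m)*(m+1) : ℕ)) : ℝ≥0∞)⁻¹ * (((m+1 : ℕ)) : ℝ≥0∞)⁻¹ := by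
  have hlog : m ≤ Nat.log 2 k := by
    have hk0 : k ≠ 0 := (lt_of_le_of_lt (Nat.zero_le _) hk1).ne'
    exact (Nat.le_log_iff_pow_le (by norm_num) hk0).mpr (le_of_lt hk1)
  have hLg : m+1 ≤ Lg k := by rw [Lg]; omega
  apply mul_le_mul'
  · rw [cwt_eq, ENNReal.inv_le_inv]
    apply Nat.cast_le.mpr
    calc 2^m*(m+1) ≤ (4*(3*k+1))*(Lg k) := by
          apply Nat.mul_le_mul _ hLg
          have h1 : 2^m ≤ k := le_of_lt hk1
          have h2 : k ≤ 4*(3*k+1) := by omega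
          exact le_trans h1 h2
      _ = 4*(3*k+1)*Lg k := by ring
  · rw [ENNReal.inv_le_inv]
    exact_mod_cast hLg

lemma tsum_s1_ne_top : ∑' k, cwt k * (((Lg k : ℕ)) : ℝ≥0∞)⁻¹ ≠ ⊤ := by
  set a : ℕ → ℝ≥0∞ := fun k => cwt k * (((Lg k : ℕ)) : ℝ≥0∞)⁻¹ with ha
  have hale : ∀ k, a k ≤ 1 := fun k =>
    mul_le_one' (cwt_le_one k) (Lg_inv_le_one k)
  have hblock : ∀ m : ℕ, ∑ k ∈ Finset.Ioc (2^m) (2^(m+1)), a k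
      ≤ (((m+1 : ℕ)) : ℝ≥0∞)⁻¹ * (((m+1 : ℕ)) : ℝ≥0∞)⁻¹ := by
    intro m
    calc ∑ k ∈ Finset.Ioc (2^m) (2^(m+1)), a k
        ≤ ∑ _k ∈ Finset.Ioc (2^m) (2^(m+1)),
            ((((2^m)*(m+1) : ℕ)) : ℝ≥0∞)⁻¹ * (((m+1 : ℕ)) : ℝ≥0∞)⁻¹ := by
          apply Finset.sum_le_sum
          intro k hk
          exact s1_block (Finset.mem_Ioc.mp hk).1
      _ = (Finset.Ioc (2^m) (2^(m+1))).card
            • (((((2^m)*(m+1) : ℕ)) : ℝ≥0∞)⁻¹ * (((m+1 : ℕ)) : ℝ≥0∞)⁻¹) := by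
          rw [Finset.sum_const]
      _ = (((m+1 : ℕ)) : ℝ≥0∞)⁻¹ * (((m+1 : ℕ)) : ℝ≥0∞)⁻¹ := by
          rw [Nat.card_Ioc, nsmul_eq_mul]
          have hc : 2^(m+1) - 2^m = 2^m := by rw [pow_succ]; omega
          rw [hc]
          have hcast : (((2^m)*(m+1) : ℕ) : ℝ≥0∞) = (2^m : ℝ≥0∞) * (((m+1 : ℕ)) : ℝ≥0∞) := by
            push_cast; ring
          rw [hcast, ENNReal.mul_inv (Or.inl (pow_ne_zero _ (by norm_num)))
            (Or.inl (ENNReal.pow_ne_top (by simp)))]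
          have h2m : ((2^m : ℕ) : ℝ≥0∞) = (2:ℝ≥0∞)^m := by push_cast; ring
          rw [h2m, ← mul_assoc, ← mul_assoc,
            ENNReal.mul_inv_cancel (pow_ne_zero _ (by norm_num)) (ENNReal.pow_ne_top (by simp)),
            one_mul]
  apply ne_top_of_le_ne_top _ (tsum_le_blocks a)
  apply ENNReal.add_ne_top.mpr
  constructor
  · exact ENNReal.add_ne_top.mpr ⟨ne_top_of_le_ne_top ENNReal.one_ne_top (hale 0),
      ne_top_of_le_ne_top ENNReal.one_ne_top (hale 1)⟩
  · apply ne_top_of_le_ne_top _ (ENNReal.tsum_le_tsum hblock)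
    have hcoe : ∀ m : ℕ, (((m+1 : ℕ)) : ℝ≥0∞)⁻¹ * (((m+1 : ℕ)) : ℝ≥0∞)⁻¹
        = (((((m+1 : ℕ) : ℝ≥0))⁻¹ * (((m+1 : ℕ) : ℝ≥0))⁻¹ : ℝ≥0) : ℝ≥0∞) := by
      intro m
      have hne : ((m+1:ℕ) : ℝ≥0) ≠ 0 := Nat.cast_ne_zero.mpr (Nat.succ_ne_zero m)
      rw [ENNReal.coe_mul, ENNReal.coe_inv hne]
      simp
    rw [tsum_congr hcoe]
    apply ENNReal.tsum_coe_ne_top_iff_summable.2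
    rw [← NNReal.summable_coe]
    have hs : Summable (fun m : ℕ => (1 / ((m+1 : ℕ) : ℝ))^2) := by
      have h2 : Summable (fun n : ℕ => 1 / (n : ℝ)^2) := Real.summable_one_div_nat_pow.mpr one_lt_two
      have h3 := (summable_nat_add_iff 1).mpr h2
      apply h3.congr
      intro m
      push_cast
      rw [div_pow]
      norm_num
    apply hs.congr
    intro m
    push_cast
    rw [pow_two]
    norm_num

lemma tsum_main_ne_top : ∑' k, cwt k * rho (badSet k) ≠ ⊤ := by
  have hterm : ∀ k, cwt k * rho (badSet k) ≤
      cwt k * (((Lg k : ℕ)) : ℝ≥0∞)⁻¹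
        + (2:ℝ≥0∞)^(k+2) * ENNReal.ofReal (1/((Mtr k + 1 : ℕ) : ℝ)) := by
    intro k
    calc cwt k * rho (badSet k) ≤ cwt k * (rho (badB k) + rho (badA k)) := by
          gcongr
          rw [badSet, Set.union_comm]
          exact measure_union_le _ _
      _ = cwt k * rho (badB k) + cwt k * rho (badA k) := by ring
      _ ≤ cwt k * (((Lg k : ℕ)) : ℝ≥0∞)⁻¹ + 1 * rho (badA k) := by
          gcongr
          · exact rho_badB_le k
          · exact cwt_le_one k
      _ ≤ cwt k * (((Lg k : ℕ)) : ℝ≥0∞)⁻¹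
            + (2:ℝ≥0∞)^(k+2) * ENNReal.ofReal (1/((Mtr k + 1 : ℕ) : ℝ)) := by
          rw [one_mul]
          gcongr
          exact rho_badA_le k
  apply ne_top_of_le_ne_top _ (ENNReal.tsum_le_tsum hterm)
  rw [ENNReal.tsum_add]
  exact ENNReal.add_ne_top.mpr ⟨tsum_s1_ne_top, tsum_s2_ne_top⟩

end Part7

section Part8

lemma ae_goodSum :
    ∀ᵐ α ∂rho, (∑' k, (badSet k).indicator (fun _ => cwt k) α) ≠ ⊤ := by
  have hmeas : ∀ k : ℕ, Measurable ((badSet k).indicator (fun _ => cwt k)) :=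
    fun k => measurable_const.indicator (measurable_badSet k)
  have hint : ∫⁻ α, (∑' k, (badSet k).indicator (fun _ => cwt k) α) ∂rho ≠ ⊤ := by
    rw [lintegral_tsum (fun k => (hmeas k).aemeasurable)]
    have heq : ∀ k : ℕ, ∫⁻ α, (badSet k).indicator (fun _ => cwt k) α ∂rho
        = cwt k * rho (badSet k) := by
      intro k
      rw [lintegral_indicator (measurable_badSet k)]
      simp
    rw [tsum_congr heq]
    exact tsum_main_ne_top
  filter_upwards [ae_lt_top (Measurable.ennreal_tsum hmeas) hint] with α hα
  exact hα.ne

lemma cfSumA_cast (α : ℝ) (n : ℕ) :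
    ((cfSumA α n : ℕ) : ℝ≥0∞) = ∑ j ∈ Finset.range n, ((Yq j α : ℕ) : ℝ≥0∞) := by
  rw [cfSumA, Nat.cast_sum, ← Finset.Ico_add_one_right_eq_Icc, Finset.sum_Ico_eq_sum_range]
  have hnn : n + 1 - 1 = n := by omega
  rw [hnn]
  apply Finset.sum_congr rfl
  intro j _
  congr 1
  rw [cfA, Yq, Nat.add_sub_cancel_left]

lemma good_block_bound {α : ℝ} {k : ℕ} (hα : α ∉ badSet k) {n : ℕ} (hn : n ≤ 2^(k+1)) :
    ((cfSumA α n : ℕ) : ℝ≥0∞) ≤ ((Bth k : ℕ) : ℝ≥0∞) := by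
  have hA : α ∉ badA k := fun h => hα (Or.inl h)
  have hB : α ∉ badB k := fun h => hα (Or.inr h)
  have hYle : ∀ j, j ∈ Finset.range (2^(k+1)) → Yq j α ≤ Mtr k := by
    intro j hj
    by_contra hgt
    refine hA (Set.mem_iUnion₂.mpr ⟨j, hj, ?_⟩)
    show Mtr k + 1 ≤ Yq j α
    omega
  rw [cfSumA_cast]
  calc ∑ j ∈ Finset.range n, ((Yq j α : ℕ) : ℝ≥0∞)
      ≤ ∑ j ∈ Finset.range (2^(k+1)), ((Yq j α : ℕ) : ℝ≥0∞) :=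
        Finset.sum_le_sum_of_subset (Finset.range_subset_range.mpr hn)
    _ = Ftr k α := by
        apply Finset.sum_congr rfl
        intro j hj
        congr 1
        exact (min_eq_left (hYle j hj)).symm
    _ ≤ ((Bth k : ℕ) : ℝ≥0∞) := not_lt.mp hB

lemma blocks_Ico_le_tsum (a : ℕ → ℝ≥0∞) :
    ∑' m, ∑ k ∈ Finset.Ico (2^m) (2^(m+1)), a k ≤ ∑' k, a k := by
  rw [ENNReal.tsum_eq_iSup_nat]
  apply iSup_le
  intro M
  have hM : ∑ m ∈ Finset.range M, ∑ k ∈ Finset.Ico (2^m) (2^(m+1)), a k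
      = ∑ k ∈ Finset.Ico 1 (2^M), a k := by
    induction M with
    | zero => simp
    | succ M ih =>
      rw [Finset.sum_range_succ, ih,
        Finset.sum_Ico_consecutive a Nat.one_le_two_pow
          (Nat.pow_le_pow_right (by norm_num) (Nat.le_succ M))]
  rw [hM]
  exact ENNReal.sum_le_tsum _

lemma tsum_top_of_good {α : ℝ}
    (hα : (∑' k, (badSet k).indicator (fun _ => cwt k) α) ≠ ⊤) :
    ∑' i : ℕ, (1 / ((cfSumA α (i + 1)) : ℝ≥0∞)) = ⊤ := by
  set b : ℕ → ℝ≥0∞ := fun i => 1 / ((cfSumA α (i + 1) : ℕ) : ℝ≥0∞) with hb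
  have key : ∀ k : ℕ, cwt k ≤ (badSet k).indicator (fun _ => cwt k) α
      + ∑ i ∈ Finset.Ico (2^k) (2^(k+1)), b i := by
    intro k
    by_cases hmem : α ∈ badSet k
    · rw [Set.indicator_of_mem hmem]
      exact le_add_right le_rfl
    · rw [Set.indicator_of_notMem hmem, zero_add]
      have hlow : ∀ i ∈ Finset.Ico (2^k) (2^(k+1)), ((Bth k : ℕ) : ℝ≥0∞)⁻¹ ≤ b i := by
        intro i hi
        rw [Finset.mem_Ico] at hi
        have hn : i + 1 ≤ 2^(k+1) := hi.2
        have := good_block_bound hmem hn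
        rw [hb]
        simp only [one_div]
        exact ENNReal.inv_le_inv.mpr this
      calc cwt k = (2^k : ℝ≥0∞) * ((Bth k : ℕ) : ℝ≥0∞)⁻¹ := by
            rw [cwt, ENNReal.div_eq_inv_mul, mul_comm]
        _ = (Finset.Ico (2^k) (2^(k+1))).card • ((Bth k : ℕ) : ℝ≥0∞)⁻¹ := by
            rw [Nat.card_Ico, nsmul_eq_mul]
            congr 1
            have hc : 2^(k+1) - 2^k = 2^k := by rw [pow_succ]; omega
            rw [hc]
            push_cast
            ring
        _ ≤ ∑ i ∈ Finset.Ico (2^k) (2^(k+1)), b i := by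
            rw [← Finset.sum_const]
            exact Finset.sum_le_sum hlow
  have hsum : (⊤ : ℝ≥0∞) ≤ ∑' k, ((badSet k).indicator (fun _ => cwt k) α
      + ∑ i ∈ Finset.Ico (2^k) (2^(k+1)), b i) := by
    rw [← tsum_cwt_top]
    exact ENNReal.tsum_le_tsum key
  rw [ENNReal.tsum_add] at hsum
  have hblocks : ∑' k, ∑ i ∈ Finset.Ico (2^k) (2^(k+1)), b i = ⊤ := by
    by_contra hne
    have h1 : (⊤:ℝ≥0∞) ≤ (∑' k, (badSet k).indicator (fun _ => cwt k) α)
        + ∑' k, ∑ i ∈ Finset.Ico (2^k) (2^(k+1)), b i := hsum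
    have h2 : (∑' k, (badSet k).indicator (fun _ => cwt k) α)
        + (∑' k, ∑ i ∈ Finset.Ico (2^k) (2^(k+1)), b i) ≠ ⊤ :=
      ENNReal.add_ne_top.mpr ⟨hα, hne⟩
    exact h2 (top_le_iff.mp h1)
  have hfinal : (⊤ : ℝ≥0∞) ≤ ∑' i, b i := by
    rw [← hblocks]
    exact blocks_Ico_le_tsum b
  exact top_le_iff.mp hfinal

end Part8

/-- For Lebesgue-a.e. irrational α ∈ (0,1), ∑_{i≥1} 1/A_i(α) = ∞. -/
theorem stmt5 :
    ∀ᵐ α ∂(volume.restrict (Set.Ioo (0 : ℝ) 1)), Irrational α →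
      ∑' i : ℕ, (1 / ((cfSumA α (i + 1)) : ℝ≥0∞)) = ⊤ := by
  have h : ∀ᵐ α ∂rho, Irrational α →
      ∑' i : ℕ, (1 / ((cfSumA α (i + 1)) : ℝ≥0∞)) = ⊤ := by
    filter_upwards [ae_goodSum] with α hα _
    exact tsum_top_of_good hα
  exact h
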